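/- arXiv:2404.05018 — 6 statements merged into one kernel-verified Lean document; each statement's English description precedes it below -/
import Mathlib

section
/- With T as above, the sequence {T^n}_{n≥1} converges to 0 in the weak operator topology on B(H): for all ξ, η ∈ H = ℓ²(ℤ) ⊕ ℂ, ⟨T^n ξ, η⟩ → 0 as n → ∞. -/
open scoped ENNReal
open Filter ContinuousLinearMap

noncomputable section

/-- `ℓ²(ℤ)` as the Hilbert space of square-summable complex families over `ℤ`. -/
abbrev l2Z : Type := lp (fun _ : ℤ => ℂ) 2

/-- The standard orthonormal basis vectors of `ℓ²(ℤ)`. -/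
noncomputable def ee (n : ℤ) : l2Z := lp.single 2 n 1

/-- The Hilbert space `H = ℓ²(ℤ) ⊕ ℂ` (Hilbert space direct sum). -/
abbrev H2 : Type := WithLp 2 (l2Z × ℂ)

/-- The element `(x, c)` of `H = ℓ²(ℤ) ⊕ ℂ`. -/
noncomputable def emb (x : l2Z) (c : ℂ) : H2 := (WithLp.equiv 2 (l2Z × ℂ)).symm (x, c)

local notation "⟪" x ", " y "⟫" => @inner ℂ _ _ x y

lemma on_ee : Orthonormal ℂ ee := by
  rw [orthonormal_iff_ite]
  intro i j
  rw [ee, ee, lp.inner_single_left]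
  simp [lp.single_apply, RCLike.inner_apply, eq_comm, Pi.single_apply]

lemma hasSum_smul_ee (x : l2Z) : HasSum (fun k => x k • ee k) x := by
  have := lp.hasSum_single (by norm_num : (2:ℝ≥0∞) ≠ ⊤) x
  convert this using 2 with k
  rw [ee, ← lp.single_smul, smul_eq_mul, mul_one]

lemma inner_ee_right (y : l2Z) (m : ℤ) : ⟪y, ee m⟫ = starRingEnd ℂ (y m) := by
  rw [ee, lp.inner_single_right, RCLike.inner_apply, one_mul]

lemma coord_tendsto (y : l2Z) : Tendsto (fun m : ℤ => y m) atTop (nhds 0) := by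
  have h2 : Summable fun m => ‖y m‖ ^ (2:ℝ≥0∞).toReal := (lp.memℓp y).summable (by norm_num)
  have h3 : Tendsto (fun m : ℤ => ‖y m‖ ^ (2:ℝ≥0∞).toReal) cofinite (nhds 0) :=
    h2.tendsto_cofinite_zero
  have h3' : Tendsto (fun m : ℤ => ‖y m‖ ^ (2:ℕ)) cofinite (nhds 0) := by
    convert h3 using 2 with m
    rw [ENNReal.toReal_ofNat, ← Real.rpow_natCast]
    norm_num
  have h4 : Tendsto (fun m : ℤ => ‖y m‖) cofinite (nhds 0) := by
    have := (Real.continuous_sqrt.tendsto 0).comp h3'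
    simpa [Function.comp_def, Real.sqrt_sq (norm_nonneg _)] using this
  have h5 : Tendsto (fun m : ℤ => ‖y m‖) atTop (nhds 0) :=
    h4.mono_left (by rw [Int.cofinite_eq]; exact le_sup_right)
  exact tendsto_zero_iff_norm_tendsto_zero.2 h5

lemma upow_ee (U : l2Z →L[ℂ] l2Z) (hU : ∀ n : ℤ, U (ee n) = ee (n + 1)) (n : ℕ) (k : ℤ) :
    (U ^ n) (ee k) = ee (k + n) := by
  induction n with
  | zero => simp
  | succ n ih =>
      rw [pow_succ', ContinuousLinearMap.mul_apply, ih, hU]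
      congr 1
      push_cast
      ring

lemma u_isom (U : l2Z →L[ℂ] l2Z) (hU : ∀ n : ℤ, U (ee n) = ee (n + 1)) (x : l2Z) :
    ‖U x‖ = ‖x‖ := by
  have key : ∀ F : Finset ℤ, ‖U (∑ k ∈ F, x k • ee k)‖ = ‖∑ k ∈ F, x k • ee k‖ := by
    intro F
    have hUs : U (∑ k ∈ F, x k • ee k) = ∑ k ∈ F, x k • ee (k + 1) := by
      rw [map_sum]; exact Finset.sum_congr rfl fun k _ => by rw [map_smul, hU]
    have o1 : Orthonormal ℂ (fun k : ℤ => ee (k + 1)) :=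
      on_ee.comp _ (add_left_injective 1)
    rw [hUs, @norm_eq_sqrt_re_inner ℂ, @norm_eq_sqrt_re_inner ℂ]
    congr 2
    rw [on_ee.inner_sum (fun k => x k) (fun k => x k) F]
    exact o1.inner_sum (fun k => x k) (fun k => x k) F
  have hx := hasSum_smul_ee x
  have h1 : Tendsto (fun F : Finset ℤ => ‖U (∑ k ∈ F, x k • ee k)‖) atTop (nhds ‖U x‖) :=
    (U.continuous.tendsto x).comp hx |>.norm
  have h2 : Tendsto (fun F : Finset ℤ => ‖U (∑ k ∈ F, x k • ee k)‖) atTop (nhds ‖x‖) := by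
    simp only [key]; exact hx.norm
  exact tendsto_nhds_unique h1 h2

lemma upow_isom (U : l2Z →L[ℂ] l2Z) (hU : ∀ n : ℤ, U (ee n) = ee (n + 1)) (n : ℕ) (x : l2Z) :
    ‖(U ^ n) x‖ = ‖x‖ := by
  induction n with
  | zero => simp
  | succ n ih => rw [pow_succ', ContinuousLinearMap.mul_apply, u_isom U hU, ih]

lemma weak (U : l2Z →L[ℂ] l2Z) (hU : ∀ n : ℤ, U (ee n) = ee (n + 1)) (x y : l2Z) :
    Tendsto (fun n : ℕ => ⟪y, (U ^ n) x⟫) atTop (nhds 0) := by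
  rw [Metric.tendsto_atTop]
  intro ε hε
  set C : ℝ := ‖y‖ + 1 with hC
  have hCpos : 0 < C := by positivity
  -- choose finite approximation
  have hx := hasSum_smul_ee x
  rw [HasSum, SummationFilter.unconditional_filter, Metric.tendsto_atTop] at hx
  obtain ⟨F, hF⟩ := hx (ε / (2 * C)) (by positivity)
  have hFle := hF F le_rfl
  rw [dist_eq_norm] at hFle
  set s : l2Z := ∑ k ∈ F, x k • ee k with hs
  -- finite sum tendsto 0
  have hterm : ∀ k : ℤ, Tendsto (fun n : ℕ => x k * ⟪y, ee (k + n)⟫) atTop (nhds 0) := by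
    intro k
    have h1 : Tendsto (fun n : ℕ => (k + n : ℤ)) atTop atTop :=
      tendsto_atTop_add_const_left _ k (tendsto_natCast_atTop_atTop)
    have h2 : Tendsto (fun n : ℕ => y ((k + n : ℤ))) atTop (nhds 0) :=
      (coord_tendsto y).comp h1
    have h3 : Tendsto (fun n : ℕ => ⟪y, ee (k + n)⟫) atTop (nhds 0) := by
      simp only [inner_ee_right]
      simpa [Function.comp_def] using ((continuous_star.tendsto (0:ℂ)).comp h2)
    simpa using h3.const_mul (x k)
  have hsum : Tendsto (fun n : ℕ => ∑ k ∈ F, x k * ⟪y, ee (k + n)⟫) atTop (nhds 0) := by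
    have := tendsto_finset_sum F (fun k _ => hterm k)
    simpa using this
  rw [Metric.tendsto_atTop] at hsum
  obtain ⟨N, hN⟩ := hsum (ε / 2) (by positivity)
  refine ⟨N, fun n hn => ?_⟩
  have hinner_s : ⟪y, (U ^ n) s⟫ = ∑ k ∈ F, x k * ⟪y, ee (k + n)⟫ := by
    rw [hs, map_sum, inner_sum]
    refine Finset.sum_congr rfl fun k _ => ?_
    rw [map_smul, upow_ee U hU, inner_smul_right]
  have hsplit : ⟪y, (U ^ n) x⟫ = ⟪y, (U ^ n) (x - s)⟫ + ∑ k ∈ F, x k * ⟪y, ee (k + n)⟫ := by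
    rw [← hinner_s, ← inner_add_right, ← map_add, sub_add_cancel]
  have hb1 : ‖⟪y, (U ^ n) (x - s)⟫‖ ≤ ε / 2 := by
    calc ‖⟪y, (U ^ n) (x - s)⟫‖ ≤ ‖y‖ * ‖(U ^ n) (x - s)‖ := norm_inner_le_norm _ _
    _ = ‖y‖ * ‖x - s‖ := by rw [upow_isom U hU]
    _ ≤ C * (ε / (2 * C)) := by
        apply mul_le_mul (by simp [hC]) ?_ (norm_nonneg _) hCpos.le
        · rw [← norm_sub_rev] at hFle; exact hFle.le
    _ = ε / 2 := by field_simp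
  have hb2 : ‖∑ k ∈ F, x k * ⟪y, ee (k + n)⟫‖ < ε / 2 := by
    have := hN n hn; rwa [dist_zero_right] at this
  rw [dist_zero_right, hsplit]
  calc ‖_ + _‖ ≤ _ + _ := norm_add_le _ _
  _ < ε / 2 + ε / 2 := by exact add_lt_add_of_le_of_lt hb1 hb2
  _ = ε := by ring

lemma tpow (U : l2Z →L[ℂ] l2Z) (T : H2 →L[ℂ] H2)
    (hT : ∀ (x : l2Z) (c : ℂ), T (emb x c) = emb (U x + c • ee 0) 0) (x : l2Z) (c : ℂ)
    (n : ℕ) : (T ^ (n + 1)) (emb x c) = emb ((U ^ n) (U x + c • ee 0)) 0 := by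
  induction n with
  | zero => simpa using hT x c
  | succ n ih =>
      rw [pow_succ', ContinuousLinearMap.mul_apply, ih, hT]
      simp [pow_succ', ContinuousLinearMap.mul_apply]

/-- the powers of `T` tend to 0 in the weak operator topology:
for all ξ, η ∈ H, ⟨Tⁿ ξ, η⟩ → 0. -/
theorem stmt_5 (U : l2Z →L[ℂ] l2Z) (hU : ∀ n : ℤ, U (ee n) = ee (n + 1))
    (T : H2 →L[ℂ] H2)
    (hT : ∀ (x : l2Z) (c : ℂ), T (emb x c) = emb (U x + c • ee 0) 0) :
    ∀ ξ η : H2,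
      Tendsto (fun n : ℕ => (inner ℂ η ((T ^ n) ξ) : ℂ)) atTop (nhds 0) := by
  intro ξ η
  set x : l2Z := ξ.fst with hx
  set c : ℂ := ξ.snd with hc
  have hξ : ξ = emb x c := rfl
  set y : l2Z := η.fst with hy
  have key : ∀ n : ℕ, ⟪η, (T ^ (n + 1)) ξ⟫ = ⟪y, (U ^ n) (U x + c • ee 0)⟫ := by
    intro n
    rw [hξ, tpow U T hT]
    rw [WithLp.prod_inner_apply]
    simp [emb, inner_add_right, inner_smul_right]
    rfl
  have h1 : Tendsto (fun n : ℕ => ⟪η, (T ^ (n + 1)) ξ⟫) atTop (nhds 0) := by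
    simp only [key]
    exact weak U hU (U x + c • ee 0) y
  exact (tendsto_add_atTop_iff_nat 1).1 h1

end
end

section
/- With T as above, the sequence {T^n}_{n≥1} is uniformly bounded in operator norm: ‖T^n‖ = √2 for every n ≥ 1. -/
open scoped ENNReal
open Filter ContinuousLinearMap

noncomputable section

theorem ee_norm (n : ℤ) : ‖ee n‖ = 1 := by
  have := lp.norm_single (p := 2) (E := fun _ : ℤ => ℂ) (by norm_num)
    n (1 : ℂ)
  simpa [ee] using this

theorem emb_norm (x : l2Z) (c : ℂ) : ‖emb x c‖ = Real.sqrt (‖x‖ ^ 2 + ‖c‖ ^ 2) := by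
  rw [emb, WithLp.prod_norm_eq_of_L2]
  rfl

/-- Agreement on the basis vectors forces equality with the identity. -/
theorem agree_on_basis {A : l2Z →L[ℂ] l2Z} (hA : ∀ n : ℤ, A (ee n) = ee n) (f : l2Z) :
    A f = f := by
  have h : HasSum (fun i : ℤ => lp.single 2 i (f i)) f :=
    lp.hasSum_single (by norm_num) f
  have h2 : HasSum (fun i : ℤ => A (lp.single 2 i (f i))) (A f) := A.hasSum h
  have h3 : ∀ i : ℤ, A (lp.single 2 i (f i)) = lp.single 2 i (f i) := by
    intro i
    have hs : lp.single (E := fun _ : ℤ => ℂ) 2 i (f i) = f i • ee i := by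
      have := lp.single_smul (E := fun _ : ℤ => ℂ) 2 i (f i) (1 : ℂ)
      simpa [ee] using this
    rw [hs, map_smul, hA]
  rw [funext h3] at h2
  exact h2.unique h

/-- the powers of `T` are uniformly bounded: ‖Tⁿ‖ = √2 for all n ≥ 1. -/
theorem stmt_6 (U : l2Z →L[ℂ] l2Z) (hU : ∀ n : ℤ, U (ee n) = ee (n + 1))
    (hUadj : ∀ n : ℤ, ContinuousLinearMap.adjoint U (ee n) = ee (n - 1))
    (T : H2 →L[ℂ] H2)
    (hT : ∀ (x : l2Z) (c : ℂ), T (emb x c) = emb (U x + c • ee 0) 0) :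
    ∀ n : ℕ, 1 ≤ n → ‖T ^ n‖ = Real.sqrt 2 := by
  -- U is an isometry
  have hAU : ∀ f : l2Z, (ContinuousLinearMap.adjoint U) (U f) = f := by
    intro f
    refine agree_on_basis (A := (ContinuousLinearMap.adjoint U).comp U) ?_ f
    intro n
    simp [hU, hUadj]
  have hiso : ∀ f : l2Z, ‖U f‖ = ‖f‖ := by
    intro f
    have h1 : (inner ℂ (U f) (U f) : ℂ) = inner ℂ f f := by
      have := ContinuousLinearMap.adjoint_inner_left (𝕜 := ℂ) U f (U f)
      rw [hAU] at this
      rw [← this]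
    have h2 : ‖U f‖ ^ 2 = ‖f‖ ^ 2 := by
      have e1 := @inner_self_eq_norm_sq ℂ _ _ _ _ (U f)
      have e2 := @inner_self_eq_norm_sq ℂ _ _ _ _ f
      rw [← e1, ← e2, h1]
    calc ‖U f‖ = Real.sqrt (‖U f‖ ^ 2) := (Real.sqrt_sq (norm_nonneg _)).symm
      _ = Real.sqrt (‖f‖ ^ 2) := by rw [h2]
      _ = ‖f‖ := Real.sqrt_sq (norm_nonneg _)
  have hisoN : ∀ (n : ℕ) (f : l2Z), ‖(U ^ n) f‖ = ‖f‖ := by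
    intro n
    induction n with
    | zero => intro f; simp
    | succ m ih =>
      intro f
      rw [pow_succ, ContinuousLinearMap.mul_apply, ih, hiso]
  -- formula for powers of T
  have hTn : ∀ (n : ℕ) (x : l2Z) (c : ℂ),
      (T ^ (n + 1)) (emb x c) = emb ((U ^ n) (U x + c • ee 0)) 0 := by
    intro n
    induction n with
    | zero => intro x c; simpa using hT x c
    | succ m ih =>
      intro x c
      rw [pow_succ, ContinuousLinearMap.mul_apply, hT, ih]
      congr 1
      rw [pow_succ, ContinuousLinearMap.mul_apply]
      simp
  -- norm of powers applied to vectors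
  have hTnorm : ∀ (n : ℕ) (x : l2Z) (c : ℂ),
      ‖(T ^ (n + 1)) (emb x c)‖ = ‖U x + c • ee 0‖ := by
    intro n x c
    rw [hTn, emb_norm, hisoN]
    simp [Real.sqrt_sq (norm_nonneg _)]
  intro n hn
  obtain ⟨m, rfl⟩ : ∃ m, n = m + 1 := ⟨n - 1, by omega⟩
  apply le_antisymm
  · apply ContinuousLinearMap.opNorm_le_bound _ (Real.sqrt_nonneg 2)
    intro v
    set x := (WithLp.equiv 2 (l2Z × ℂ) v).1 with hx
    set c := (WithLp.equiv 2 (l2Z × ℂ) v).2 with hc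
    have hv : v = emb x c := rfl
    rw [hv, hTnorm, emb_norm]
    have h1 : ‖U x + c • ee 0‖ ≤ ‖x‖ + ‖c‖ := by
      calc ‖U x + c • ee 0‖ ≤ ‖U x‖ + ‖c • ee 0‖ := norm_add_le _ _
        _ = ‖x‖ + ‖c‖ := by rw [hiso, norm_smul, ee_norm, mul_one]
    have h2 : ‖x‖ + ‖c‖ ≤ Real.sqrt 2 * Real.sqrt (‖x‖ ^ 2 + ‖c‖ ^ 2) := by
      rw [← Real.sqrt_mul (by norm_num)]
      rw [show (‖x‖ + ‖c‖) = Real.sqrt ((‖x‖ + ‖c‖) ^ 2) from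
        (Real.sqrt_sq (by positivity)).symm]
      apply Real.sqrt_le_sqrt
      nlinarith [sq_nonneg (‖x‖ - ‖c‖)]
    linarith
  · -- lower bound: test vector emb (ee (-1)) 1
    have hval : ‖(T ^ (m + 1)) (emb (ee (-1)) 1)‖ = 2 := by
      rw [hTnorm]
      have : U (ee (-1)) = ee 0 := by simpa using hU (-1)
      rw [this, one_smul]
      calc ‖ee 0 + ee 0‖ = ‖(2 : ℂ) • ee 0‖ := by rw [two_smul]
        _ = 2 := by rw [norm_smul, ee_norm, mul_one]; norm_num
    have hvnorm : ‖emb (ee (-1)) 1‖ = Real.sqrt 2 := by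
      rw [emb_norm, ee_norm]
      norm_num
    have hle := (T ^ (m + 1)).le_opNorm (emb (ee (-1)) 1)
    rw [hval, hvnorm] at hle
    have hs : Real.sqrt 2 * Real.sqrt 2 = 2 := Real.mul_self_sqrt (by norm_num)
    nlinarith [Real.sqrt_nonneg 2, ContinuousLinearMap.opNorm_nonneg (T ^ (m + 1))]
end
end

section
/- The vector η = (0, 1) ∈ H = ℓ²(ℤ) ⊕ ℂ is cyclic for the C*-algebra B generated by T: the closure of {S η : S ∈ B} equals H. -/
open scoped ENNReal
open Filter ContinuousLinearMap
open scoped InnerProductSpace ComplexConjugate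

set_option synthInstance.maxHeartbeats 1000000
set_option maxHeartbeats 1000000

noncomputable section

-- coordinate via inner product
lemma inner_ee (n : ℤ) (f : l2Z) : ⟪ee n, f⟫_ℂ = f n := by
  rw [ee, lp.inner_single_left]
  simp [RCLike.inner_apply]

lemma inner_ee_ee (a b : ℤ) : ⟪ee a, ee b⟫_ℂ = if b = a then 1 else 0 := by
  rw [inner_ee, ee, lp.single_apply]
  split_ifs <;> simp_all

lemma dense_span_ee : Dense (Submodule.span ℂ (Set.range ee) : Set l2Z) := by
  intro f
  have h := (lp.hasSum_single (E := fun _ : ℤ => ℂ) ENNReal.ofNat_ne_top f)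
  refine mem_closure_of_tendsto h ?_
  filter_upwards with s
  refine Submodule.sum_mem _ fun i _ => ?_
  have : lp.single 2 i (f i : ℂ) = (f i) • ee i := by
    ext j
    simp [ee, lp.single_apply, Pi.single_apply]
  rw [this]
  exact Submodule.smul_mem _ _ (Submodule.subset_span ⟨i, rfl⟩)

lemma shift_apply (U : l2Z →L[ℂ] l2Z) (hU : ∀ n : ℤ, U (ee n) = ee (n + 1))
    (z : l2Z) (n : ℤ) : (U z : ∀ _ : ℤ, ℂ) n = z (n - 1) := by
  have key : (innerSL ℂ (ee n)).comp U = innerSL ℂ (ee (n - 1)) := by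
    apply ContinuousLinearMap.ext_on dense_span_ee
    rintro _ ⟨k, rfl⟩
    simp only [ContinuousLinearMap.comp_apply, innerSL_apply_apply, hU, inner_ee_ee]
    have : (k + 1 = n) ↔ (k = n - 1) := by omega
    split_ifs with h1 h2 h2 <;> first | rfl | omega
  have := congrArg (fun f : l2Z →L[ℂ] ℂ => f z) key
  simpa only [ContinuousLinearMap.comp_apply, innerSL_apply_apply, inner_ee] using this

lemma shift_pow_apply (U : l2Z →L[ℂ] l2Z) (hU : ∀ n : ℤ, U (ee n) = ee (n + 1))
    (m : ℕ) (z : l2Z) (n : ℤ) : ((U ^ m) z : ∀ _ : ℤ, ℂ) n = z (n - m) := by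
  induction m generalizing z n with
  | zero => simp
  | succ m ih =>
    rw [pow_succ, ContinuousLinearMap.mul_apply, ih, shift_apply U hU]
    push_cast
    ring_nf

lemma inner_emb (x : l2Z) (c : ℂ) (y : l2Z) (d : ℂ) :
    ⟪emb x c, emb y d⟫_ℂ = ⟪x, y⟫_ℂ + (starRingEnd ℂ) c * d := by
  rw [WithLp.prod_inner_apply]
  show ⟪x, y⟫_ℂ + ⟪c, d⟫_ℂ = _
  simp [mul_comm]


/-- the vector η = (0,1) ∈ ℓ²(ℤ) ⊕ ℂ is cyclic for the C*-algebra
`B = C*(T)` (the closed star-subalgebra generated by `T` and 1): the set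
`{S η : S ∈ B}` is dense in `H`. -/
theorem stmt_8 (U : l2Z →L[ℂ] l2Z) (hU : ∀ n : ℤ, U (ee n) = ee (n + 1))
    (T : H2 →L[ℂ] H2)
    (hT : ∀ (x : l2Z) (c : ℂ), T (emb x c) = emb (U x + c • ee 0) 0) :
    Dense ((fun S : H2 →L[ℂ] H2 => S (emb 0 1)) ''
      ((StarAlgebra.adjoin ℂ {T}).topologicalClosure : Set (H2 →L[ℂ] H2))) := by
  set A := (StarAlgebra.adjoin ℂ {T}).topologicalClosure with hA
  have hTA : T ∈ A :=
    StarSubalgebra.le_topologicalClosure _ (StarAlgebra.subset_adjoin ℂ {T} rfl)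
  -- the evaluation-at-η linear map
  let evalL : (H2 →L[ℂ] H2) →ₗ[ℂ] H2 :=
    { toFun := fun S => S (emb 0 1)
      map_add' := fun _ _ => rfl
      map_smul' := fun _ _ => rfl }
  set M : Submodule ℂ H2 := (Subalgebra.toSubmodule A.toSubalgebra).map evalL with hM
  have hset : ((fun S : H2 →L[ℂ] H2 => S (emb 0 1)) '' (A : Set (H2 →L[ℂ] H2)))
      = (M : Set H2) := rfl
  rw [hset]
  have memM : ∀ S : H2 →L[ℂ] H2, S ∈ A → evalL S ∈ M := fun S hS => ⟨S, hS, rfl⟩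
  -- powers of T on η
  have hTpow : ∀ k : ℕ, (T ^ (k + 1)) (emb 0 1) = emb (ee k) 0 := by
    intro k
    induction k with
    | zero => simp [pow_one, hT, ee]
    | succ k ih =>
      rw [pow_succ', ContinuousLinearMap.mul_apply, ih, hT]
      simp only [hU, zero_smul, add_zero]
      norm_cast
  -- powers of T on (y, 0)
  have hTpow2 : ∀ (m : ℕ) (y : l2Z), (T ^ m) (emb y 0) = emb ((U ^ m) y) 0 := by
    intro m
    induction m with
    | zero => intro y; simp
    | succ m ih =>
      intro y
      rw [pow_succ, ContinuousLinearMap.mul_apply, hT, zero_smul, add_zero, ih,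
        pow_succ, ContinuousLinearMap.mul_apply]
  -- density via trivial orthogonal complement
  rw [Submodule.dense_iff_topologicalClosure_eq_top,
    Submodule.topologicalClosure_eq_top_iff, Submodule.eq_bot_iff]
  intro v hv
  rw [Submodule.mem_orthogonal] at hv
  have hveq : emb v.ofLp.1 v.ofLp.2 = v := rfl
  -- second coordinate vanishes
  have hd : v.ofLp.2 = 0 := by
    have h1 := hv (emb 0 1) (memM 1 (one_mem A))
    rw [← hveq, inner_emb] at h1
    simpa using h1
  -- nonnegative coordinates vanish
  have hpos : ∀ k : ℕ, (v.ofLp.1 : ∀ _ : ℤ, ℂ) k = 0 := by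
    intro k
    have h1 := hv (emb (ee k) 0) (hTpow k ▸ memM (T ^ (k + 1)) (pow_mem hTA _))
    rw [← hveq, inner_emb, inner_ee] at h1
    simpa using h1
  -- negative coordinates vanish
  have hneg : ∀ m : ℕ, (v.ofLp.1 : ∀ _ : ℤ, ℂ) (-(m : ℤ)) = 0 := by
    intro m
    have hmem : star (T ^ m) * T ∈ A := mul_mem (star_mem (pow_mem hTA m)) hTA
    have h1 := hv _ (memM _ hmem)
    have h2 : evalL (star (T ^ m) * T) = (ContinuousLinearMap.adjoint (T ^ m)) (emb (ee 0) 0) := by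
      show (star (T ^ m)) (T (emb 0 1)) = _
      rw [ContinuousLinearMap.star_eq_adjoint, hT]
      simp [ee]
    rw [h2] at h1
    rw [ContinuousLinearMap.adjoint_inner_left] at h1
    rw [← hveq, hd, hTpow2, inner_emb, inner_ee, shift_pow_apply U hU] at h1
    simpa using h1
  -- conclude v = 0
  have hy : v.ofLp.1 = 0 := by
    ext n
    rcases le_or_gt 0 n with h | h
    · lift n to ℕ using h
      simpa using hpos n
    · obtain ⟨m, rfl⟩ : ∃ m : ℕ, n = -(m : ℤ) := ⟨n.natAbs, by omega⟩
      simpa using hneg m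
  rw [← hveq, hy, hd]
  rfl
end
end

section
/- For every m ∈ ℤ, the basis vector e_m ∈ ℓ²(ℤ) ⊕ {0} ⊆ H lies in the (non-closed) orbit {S η : S in the *-algebra generated by T and 1}, where η = (0,1). -/
open scoped ENNReal
open Filter ContinuousLinearMap

noncomputable section

/-- Two continuous linear maps on `ℓ²(ℤ)` agreeing on all singles are equal. -/
theorem l2Z_clm_ext {F : Type*} [NormedAddCommGroup F] [NormedSpace ℂ F]
    {f g : l2Z →L[ℂ] F}
    (h : ∀ (k : ℤ) (c : ℂ), f (lp.single 2 k c) = g (lp.single 2 k c)) : f = g := by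
  ext y
  have hs : HasSum (fun k : ℤ => lp.single 2 k (y k)) y :=
    lp.hasSum_single (by norm_num) y
  have h1 := hs.mapL f
  have h2 := hs.mapL g
  simp only [h] at h1
  exact h1.unique h2

lemma inner_ee_single (n k : ℤ) (c : ℂ) :
    (inner ℂ (ee n) (lp.single 2 k c) : ℂ) = if k = n then c else 0 := by
  rw [lp.inner_single_right]
  rcases eq_or_ne k n with h | h
  · subst h
    rw [ee, lp.single_apply_self]
    simp [RCLike.inner_apply]
  · rw [ee, lp.single_apply_ne _ _ _ h]
    simp [h, RCLike.inner_apply]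

@[simp] lemma emb_fst (x : l2Z) (c : ℂ) : (emb x c).fst = x := rfl
@[simp] lemma emb_snd (x : l2Z) (c : ℂ) : (emb x c).snd = c := rfl

lemma emb_add (x y : l2Z) (c d : ℂ) : emb x c + emb y d = emb (x + y) (c + d) := rfl
lemma emb_sub (x y : l2Z) (c d : ℂ) : emb x c - emb y d = emb (x - y) (c - d) := rfl
lemma emb_smul (a : ℂ) (x : l2Z) (c : ℂ) : a • emb x c = emb (a • x) (a • c) := rfl
lemma emb_eq_emb {x y : l2Z} {c d : ℂ} (h1 : x = y) (h2 : c = d) : emb x c = emb y d := by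
  rw [h1, h2]

set_option maxHeartbeats 1000000 in
/-- every basis vector `e_m ⊕ 0` lies in the (non-closed) orbit of
η = (0,1) under the unital *-algebra generated by `T`. -/
theorem stmt_9 (U : l2Z →L[ℂ] l2Z) (hU : ∀ n : ℤ, U (ee n) = ee (n + 1))
    (T : H2 →L[ℂ] H2)
    (hT : ∀ (x : l2Z) (c : ℂ), T (emb x c) = emb (U x + c • ee 0) 0) :
    ∀ m : ℤ, ∃ S ∈ StarAlgebra.adjoin ℂ {T}, S (emb 0 1) = emb (ee m) 0 := by
  -- `U` on singles
  have hsingle : ∀ (k : ℤ) (c : ℂ), lp.single 2 k c = c • ee k := by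
    intro k c
    rw [ee, ← lp.single_smul, smul_eq_mul, mul_one]
  have hU' : ∀ (k : ℤ) (c : ℂ), U (lp.single 2 k c) = lp.single 2 (k + 1) c := by
    intro k c
    rw [hsingle, map_smul, hU, hsingle]
  -- the adjoint of `U` is the backwards shift
  have hUadj : ∀ n : ℤ, (ContinuousLinearMap.adjoint U) (ee n) = ee (n - 1) := by
    intro n
    apply ext_inner_right ℂ
    intro v
    rw [ContinuousLinearMap.adjoint_inner_left]
    have key : ((innerSL ℂ (ee n)).comp U) = innerSL ℂ (ee (n - 1)) := by
      apply l2Z_clm_ext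
      intro k c
      simp only [ContinuousLinearMap.comp_apply, innerSL_apply_apply, hU',
        inner_ee_single]
      split_ifs with h1 h2 h2 <;> first | rfl | omega
    have := congrFun (congrArg (DFunLike.coe) key) v
    simpa using this
  have hUUadj : ∀ y : l2Z, U ((ContinuousLinearMap.adjoint U) y) = y := by
    have key : U.comp (ContinuousLinearMap.adjoint U) = ContinuousLinearMap.id ℂ l2Z := by
      apply l2Z_clm_ext
      intro k c
      simp only [ContinuousLinearMap.comp_apply, ContinuousLinearMap.id_apply, hsingle,
        map_smul, hUadj, hU]
      rw [sub_add_cancel]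
    intro y
    have := congrFun (congrArg (DFunLike.coe) key) y
    simpa using this
  -- the adjoint of `T`
  have hTs : ∀ (y : l2Z) (d : ℂ),
      (star T) (emb y d) = emb ((ContinuousLinearMap.adjoint U) y) (inner ℂ (ee 0) y) := by
    intro y d
    rw [ContinuousLinearMap.star_eq_adjoint]
    apply ext_inner_right ℂ
    intro w
    rw [ContinuousLinearMap.adjoint_inner_left]
    have hw : w = emb w.fst w.snd := rfl
    conv_lhs => rw [hw, hT]
    simp only [WithLp.prod_inner_apply, WithLp.ofLp_fst, WithLp.ofLp_snd, emb_fst, emb_snd, inner_add_right, inner_smul_right,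
      inner_zero_right, add_zero, RCLike.inner_apply, ContinuousLinearMap.adjoint_inner_left,
      map_mul, RingHom.coe_comp]
    rw [← inner_conj_symm y (ee 0)]
    ring_nf
  -- abbreviations
  set Ts := star T with hTsdef
  set A := T * Ts with hAdef
  have hA : ∀ (y : l2Z) (d : ℂ),
      A (emb y d) = emb (y + (inner ℂ (ee 0) y : ℂ) • ee 0) 0 := by
    intro y d
    rw [hAdef, ContinuousLinearMap.mul_apply, hTs, hT, hUUadj]
  set P : H2 →L[ℂ] H2 := (2 : ℂ)⁻¹ • ((A - 1) ^ 2 - A + 1) with hPdef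
  have hee00 : (inner ℂ (ee 0) (ee 0) : ℂ) = 1 := by
    have h := inner_ee_single 0 0 1
    simpa [ee] using h
  have hP : ∀ (y : l2Z) (d : ℂ), P (emb y d) = emb 0 d := by
    intro y d
    set c : ℂ := inner ℂ (ee 0) y with hc
    have hA1 : (A - 1) (emb y d) = emb (c • ee 0) (-d) := by
      rw [ContinuousLinearMap.sub_apply, ContinuousLinearMap.one_apply, hA]
      rw [emb_sub]
      exact emb_eq_emb (by abel) (by ring)
    have hA2 : (((A - 1) ^ 2 : H2 →L[ℂ] H2)) (emb y d) = emb (c • ee 0) d := by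
      rw [sq, ContinuousLinearMap.mul_apply, hA1, ContinuousLinearMap.sub_apply,
        ContinuousLinearMap.one_apply, hA]
      rw [inner_smul_right, hee00, mul_one, emb_sub]
      exact emb_eq_emb (by abel) (by ring)
    rw [hPdef, ContinuousLinearMap.smul_apply, ContinuousLinearMap.add_apply,
      ContinuousLinearMap.sub_apply, ContinuousLinearMap.one_apply, hA2, hA]
    rw [emb_sub, emb_add, emb_smul]
    exact emb_eq_emb (by rw [← hc]; module) (by simp [smul_eq_mul]; ring)
  set Q : H2 →L[ℂ] H2 := (1 - P) * Ts with hQdef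
  have hQ : ∀ (y : l2Z) (d : ℂ), Q (emb y d) = emb ((ContinuousLinearMap.adjoint U) y) 0 := by
    intro y d
    rw [hQdef, ContinuousLinearMap.mul_apply, hTs, ContinuousLinearMap.sub_apply,
      ContinuousLinearMap.one_apply, hP, emb_sub]
    exact emb_eq_emb (by abel) (by ring)
  -- membership facts
  have hTmem : T ∈ StarAlgebra.adjoin ℂ {T} := StarAlgebra.self_mem_adjoin_singleton ℂ T
  have hTsmem : Ts ∈ StarAlgebra.adjoin ℂ {T} := star_mem hTmem
  have hAmem : A ∈ StarAlgebra.adjoin ℂ {T} := mul_mem hTmem hTsmem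
  have hPmem : P ∈ StarAlgebra.adjoin ℂ {T} :=
    SMulMemClass.smul_mem _ (add_mem (sub_mem (pow_mem (sub_mem hAmem (one_mem _)) 2) hAmem)
      (one_mem _))
  have hQmem : Q ∈ StarAlgebra.adjoin ℂ {T} := mul_mem (sub_mem (one_mem _) hPmem) hTsmem
  -- action on η
  have hη : T (emb 0 1) = emb (ee 0) 0 := by
    rw [hT]
    exact emb_eq_emb (by simp) rfl
  have hpow : ∀ k : ℕ, (T ^ (k + 1)) (emb 0 1) = emb (ee k) 0 := by
    intro k
    induction k with
    | zero => simpa using hη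
    | succ k ih =>
      have : T ^ (k + 1 + 1) = T * T ^ (k + 1) := pow_succ' T (k + 1)
      rw [this, ContinuousLinearMap.mul_apply, ih, hT]
      refine emb_eq_emb ?_ rfl
      rw [hU]
      push_cast
      simp
  have hQpow : ∀ k : ℕ, (Q ^ k) (emb (ee 0) 0) = emb (ee (-(k : ℤ))) 0 := by
    intro k
    induction k with
    | zero => simp [ee]
    | succ k ih =>
      have : Q ^ (k + 1) = Q * Q ^ k := pow_succ' Q k
      rw [this, ContinuousLinearMap.mul_apply, ih, hQ, hUadj]
      refine emb_eq_emb ?_ rfl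
      congr 1
      omega
  intro m
  cases m with
  | ofNat k =>
    exact ⟨T ^ (k + 1), pow_mem hTmem _, hpow k⟩
  | negSucc k =>
    refine ⟨Q ^ (k + 1) * T, mul_mem (pow_mem hQmem _) hTmem, ?_⟩
    rw [ContinuousLinearMap.mul_apply, hη, hQpow]
    refine emb_eq_emb ?_ rfl
    congr 1
end
end

section
/- The C*-algebra B generated by T contains the ideal K(H) of all compact operators on H; in particular the identity representation of B on H is irreducible. -/
open scoped ENNReal
open Filter ContinuousLinearMap

set_option synthInstance.maxHeartbeats 1000000
set_option maxHeartbeats 1000000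

noncomputable section

namespace Stmt10

open scoped ComplexConjugate

local notation "⟪" x ", " y "⟫" => @inner ℂ _ _ x y

lemma emb_fst (x : l2Z) (c : ℂ) : (emb x c).fst = x := rfl
lemma emb_snd (x : l2Z) (c : ℂ) : (emb x c).snd = c := rfl
lemma emb_eta (y : H2) : emb y.fst y.snd = y := rfl
lemma emb_add (x y : l2Z) (c d : ℂ) : emb x c + emb y d = emb (x + y) (c + d) := rfl
lemma emb_sub (x y : l2Z) (c d : ℂ) : emb x c - emb y d = emb (x - y) (c - d) := rfl
lemma emb_smul (a : ℂ) (x : l2Z) (c : ℂ) : a • emb x c = emb (a • x) (a * c) := rfl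
lemma emb_zero : emb 0 0 = (0 : H2) := rfl

lemma inner_emb (x y : l2Z) (c d : ℂ) : ⟪emb x c, emb y d⟫ = ⟪x, y⟫ + conj c * d := by
  simp [emb, WithLp.prod_inner_apply, mul_comm]

lemma inner_ee_apply (n : ℤ) (x : l2Z) : ⟪ee n, x⟫ = x n := by
  rw [ee, lp.inner_single_left]
  simp [RCLike.inner_apply]

lemma ee_apply (m n : ℤ) : (ee n : ∀ i : ℤ, ℂ) m = if m = n then 1 else 0 := by
  rw [ee, lp.single_apply]
  by_cases h : m = n <;> simp [h]

lemma inner_ee_ee (m n : ℤ) : ⟪ee m, ee n⟫ = if m = n then 1 else 0 := by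
  rw [inner_ee_apply, ee_apply]
  try simp [eq_comm]

/-- key vectors -/
noncomputable def fv (n : ℤ) : H2 := emb (ee n) 0
noncomputable def av : H2 := emb 0 1

noncomputable def bb : Option ℤ → H2 := fun i => i.elim av fv

lemma inner_fv_fv (m n : ℤ) : ⟪fv m, fv n⟫ = if m = n then 1 else 0 := by
  rw [fv, fv, inner_emb, inner_ee_ee]; simp

lemma inner_fv_av (n : ℤ) : ⟪fv n, av⟫ = 0 := by
  rw [fv, av, inner_emb]; simp

lemma inner_av_fv (n : ℤ) : ⟪av, fv n⟫ = 0 := by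
  rw [fv, av, inner_emb]; simp

lemma inner_av_av : ⟪av, av⟫ = 1 := by
  rw [av, inner_emb]; simp

lemma bb_orthonormal : Orthonormal ℂ bb := by
  rw [orthonormal_iff_ite]
  rintro (_ | m) (_ | n)
  · simpa [bb] using inner_av_av
  · simpa [bb] using inner_av_fv _
  · simpa [bb] using inner_fv_av _
  · simpa [bb, Option.some.injEq] using inner_fv_fv _ _

lemma inner_fv (n : ℤ) (y : H2) : ⟪fv n, y⟫ = y.fst n := by
  conv_lhs => rw [← emb_eta y, fv, inner_emb, inner_ee_apply]
  try simp
  try rfl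

lemma inner_av (y : H2) : ⟪av, y⟫ = y.snd := by
  conv_lhs => rw [← emb_eta y, av, inner_emb]
  try simp
  try rfl

lemma bb_span_orth : (Submodule.span ℂ (Set.range bb))ᗮ = ⊥ := by
  rw [Submodule.eq_bot_iff]
  intro v hv
  have h : ∀ i, ⟪bb i, v⟫ = 0 := fun i =>
    hv _ (Submodule.subset_span (Set.mem_range_self i))
  have h1 : v.snd = 0 := by rw [← inner_av v]; exact h none
  have h2 : v.fst = 0 := by
    ext n
    have := h (some n)
    rw [show bb (some n) = fv n from rfl, inner_fv] at this
    simpa using this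
  rw [← emb_eta v, h1, h2, emb_zero]


/-- The rank-one operator `x ↦ ⟪v, x⟫ • u`. -/
noncomputable def rk (u v : H2) : H2 →L[ℂ] H2 :=
  ContinuousLinearMap.smulRightL ℂ H2 H2 (innerSL ℂ v) u

lemma rk_apply (u v x : H2) : rk u v x = ⟪v, x⟫ • u := rfl

lemma rk_comp (u v : H2) (A : H2 →L[ℂ] H2) :
    (rk u v).comp A = rk u (ContinuousLinearMap.adjoint A v) := by
  ext x
  simp only [ContinuousLinearMap.comp_apply, rk_apply,
    ContinuousLinearMap.adjoint_inner_left]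

lemma comp_rk (u v : H2) (A : H2 →L[ℂ] H2) : A.comp (rk u v) = rk (A u) v := by
  ext x
  simp only [ContinuousLinearMap.comp_apply, rk_apply, map_smul]

lemma rk_comp_rk (u v u' v' : H2) :
    (rk u v).comp (rk u' v') = ⟪v, u'⟫ • rk u v' := by
  ext x
  simp only [ContinuousLinearMap.comp_apply, rk_apply, ContinuousLinearMap.smul_apply,
    inner_smul_right, smul_smul]
  ring_nf

lemma star_rk (u v : H2) : star (rk u v) = rk v u := by
  rw [ContinuousLinearMap.star_eq_adjoint]
  symm
  rw [ContinuousLinearMap.eq_adjoint_iff]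
  intro x y
  simp only [rk_apply, inner_smul_left, inner_smul_right, inner_conj_symm]
  ring

lemma rk_add_right (u v w : H2) : rk u (v + w) = rk u v + rk u w := by
  ext x; simp [rk_apply, inner_add_left, add_smul]

lemma rk_smul_right (c : ℂ) (u v : H2) : rk u (c • v) = (conj c) • rk u v := by
  ext x; simp [rk_apply, inner_smul_left, smul_smul]
  rw [mul_comm]

lemma rk_zero_right (u : H2) : rk u 0 = 0 := by
  ext x; simp [rk_apply]

lemma rk_norm_le (u v : H2) : ‖rk u v‖ ≤ ‖v‖ * ‖u‖ := by
  refine ContinuousLinearMap.opNorm_le_bound _ (by positivity) fun x => ?_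
  rw [rk_apply, norm_smul]
  calc ‖⟪v, x⟫‖ * ‖u‖ ≤ ‖v‖ * ‖x‖ * ‖u‖ :=
        mul_le_mul_of_nonneg_right (norm_inner_le_norm v x) (norm_nonneg u)
    _ = ‖v‖ * ‖u‖ * ‖x‖ := by ring

lemma continuous_rk_left (w : H2) : Continuous fun u : H2 => rk u w :=
  (ContinuousLinearMap.smulRightL ℂ H2 H2 (innerSL ℂ w)).continuous

lemma continuous_rk_right (u : H2) : Continuous fun w : H2 => rk u w := by
  have : (fun w : H2 => rk u w) =
      (fun c : H2 →L[ℂ] ℂ => (ContinuousLinearMap.smulRightL ℂ H2 H2).flip u c) ∘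
        (fun w : H2 => innerSL ℂ w) := rfl
  rw [this]
  exact (((ContinuousLinearMap.smulRightL ℂ H2 H2).flip u).continuous).comp
    (innerSL ℂ).continuous

/-- The Hilbert basis of `H2`. -/
noncomputable def bB : HilbertBasis (Option ℤ) ℂ H2 :=
  HilbertBasis.mkOfOrthogonalEqBot bb_orthonormal bb_span_orth

lemma bB_coe : ⇑bB = bb := HilbertBasis.coe_mkOfOrthogonalEqBot _ _

lemma bb_hasSum (y : H2) : HasSum (fun i => ⟪bb i, y⟫ • bb i) y := by
  rw [← bB_coe]
  simpa only [HilbertBasis.repr_apply_apply] using bB.hasSum_repr y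

/-- finite-rank projection -/
noncomputable def Pfin (s : Finset (Option ℤ)) : H2 →L[ℂ] H2 :=
  ∑ i ∈ s, rk (bb i) (bb i)

lemma Pfin_apply (s : Finset (Option ℤ)) (x : H2) :
    Pfin s x = ∑ i ∈ s, ⟪bb i, x⟫ • bb i := by
  simp [Pfin, ContinuousLinearMap.sum_apply, rk_apply]

lemma Pfin_norm_le (s : Finset (Option ℤ)) (x : H2) : ‖Pfin s x‖ ≤ ‖x‖ := by
  have h1 : ‖Pfin s x‖ ^ 2 ≤ ‖x‖ ^ 2 := by
    have hb := bb_orthonormal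
    have heq : ‖Pfin s x‖ ^ 2 = ∑ i ∈ s, ‖⟪bb i, x⟫‖ ^ 2 := by
      rw [Pfin_apply, ← inner_self_eq_norm_sq (𝕜 := ℂ),
        hb.inner_sum (fun i => ⟪bb i, x⟫) (fun i => ⟪bb i, x⟫) s]
      rw [map_sum]
      congr 1
      ext i
      rw [RCLike.conj_mul]
      norm_cast
    rw [heq]
    exact hb.sum_inner_products_le x
  exact (pow_le_pow_iff_left₀ (norm_nonneg _) (norm_nonneg _) two_ne_zero).1 h1

lemma bb_dense : (Submodule.span ℂ (Set.range bb)).topologicalClosure = ⊤ :=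
  Submodule.topologicalClosure_eq_top_iff.2 bb_span_orth

lemma eq_top_of_bb_mem (W : Submodule ℂ H2) (hW : IsClosed (W : Set H2))
    (h : ∀ i, bb i ∈ W) : W = ⊤ := by
  have h1 : Submodule.span ℂ (Set.range bb) ≤ W :=
    Submodule.span_le.2 (Set.range_subset_iff.2 h)
  have h2 := Submodule.topologicalClosure_minimal (Submodule.span ℂ (Set.range bb)) h1 hW
  rw [bb_dense] at h2
  exact top_le_iff.1 h2

lemma coord_eq (v w : l2Z) (h : ∀ n, ⟪ee n, v⟫ = ⟪ee n, w⟫) : v = w := by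
  ext n
  have := h n
  rwa [inner_ee_apply, inner_ee_apply] at this

lemma ee_span_orth : (Submodule.span ℂ (Set.range ee))ᗮ = ⊥ := by
  rw [Submodule.eq_bot_iff]
  intro v hv
  refine coord_eq v 0 fun n => ?_
  rw [hv _ (Submodule.subset_span (Set.mem_range_self n)), inner_zero_right]

lemma ee_dense : Dense ((Submodule.span ℂ (Set.range ee) : Submodule ℂ l2Z) : Set l2Z) := by
  rw [dense_iff_closure_eq,
    ← Submodule.topologicalClosure_coe (Submodule.span ℂ (Set.range ee)),
    Submodule.topologicalClosure_eq_top_iff.2 ee_span_orth, Submodule.top_coe]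

lemma clm_ext_ee {A B : l2Z →L[ℂ] l2Z} (h : ∀ n, A (ee n) = B (ee n)) : A = B :=
  ContinuousLinearMap.ext_on ee_dense (by rintro x ⟨n, rfl⟩; exact h n)

section ops

variable {U : l2Z →L[ℂ] l2Z} (hU : ∀ n : ℤ, U (ee n) = ee (n + 1))
  {T : H2 →L[ℂ] H2} (hT : ∀ (x : l2Z) (c : ℂ), T (emb x c) = emb (U x + c • ee 0) 0)

include hU in
lemma Uadj_ee (n : ℤ) : ContinuousLinearMap.adjoint U (ee n) = ee (n - 1) := by
  refine coord_eq _ _ fun m => ?_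
  rw [ContinuousLinearMap.adjoint_inner_right, hU, inner_ee_ee, inner_ee_ee]
  congr 1
  simp only [eq_iff_iff]
  omega

include hU in
lemma U_Uadj (y : l2Z) : U (ContinuousLinearMap.adjoint U y) = y := by
  have h : U.comp (ContinuousLinearMap.adjoint U) = ContinuousLinearMap.id ℂ l2Z := by
    refine clm_ext_ee fun n => ?_
    rw [ContinuousLinearMap.comp_apply, Uadj_ee hU, hU, ContinuousLinearMap.id_apply,
      sub_add_cancel]
  calc U (ContinuousLinearMap.adjoint U y)
      = (U.comp (ContinuousLinearMap.adjoint U)) y := rfl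
    _ = y := by rw [h]; rfl

include hT hU in
lemma T_fv (n : ℤ) : T (fv n) = fv (n + 1) := by
  rw [fv, hT, hU]
  simp [fv]

include hT in
lemma T_av : T av = fv 0 := by
  rw [av, hT]
  simp [fv]

include hT in
lemma Tadj_apply (y : H2) :
    ContinuousLinearMap.adjoint T y = emb (ContinuousLinearMap.adjoint U y.fst) ⟪ee 0, y.fst⟫ := by
  refine ext_inner_left ℂ fun v => ?_
  rw [ContinuousLinearMap.adjoint_inner_right]
  conv_lhs => rw [← emb_eta v, hT]
  simp only [WithLp.prod_inner_apply, emb_fst, emb_snd, inner_add_left, inner_smul_left,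
    ContinuousLinearMap.adjoint_inner_right, inner_zero_left, map_zero, zero_mul, add_zero, RCLike.inner_apply]
  simp [emb, ContinuousLinearMap.adjoint_inner_right, inner_add_left, inner_smul_left, mul_comm]

include hT hU in
lemma Tadj_fv (n : ℤ) :
    ContinuousLinearMap.adjoint T (fv n) = fv (n - 1) + (if n = 0 then (1:ℂ) else 0) • av := by
  rw [Tadj_apply hT]
  rw [show (fv n).fst = ee n from rfl, Uadj_ee hU, inner_ee_ee]
  rw [fv, av, emb_smul, emb_add, smul_zero, mul_one, add_zero, zero_add]
  congr 1
  by_cases h : n = 0 <;> simp [h, eq_comm]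

include hT in
lemma Tadj_av : ContinuousLinearMap.adjoint T av = 0 := by
  rw [Tadj_apply hT]
  rw [show (av).fst = (0 : l2Z) from rfl, map_zero, inner_zero_right, emb_zero]

include hT hU in
lemma TTadj : T.comp (ContinuousLinearMap.adjoint T)
    = 1 + rk (fv 0) (fv 0) - rk av av := by
  ext y
  rw [ContinuousLinearMap.comp_apply, Tadj_apply hT, hT, U_Uadj hU]
  have h1 : ⟪fv 0, y⟫ = ⟪ee 0, y.fst⟫ := by rw [inner_fv, inner_ee_apply]
  simp only [ContinuousLinearMap.sub_apply, ContinuousLinearMap.add_apply,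
    ContinuousLinearMap.one_apply, rk_apply, h1, inner_av]
  conv_rhs => rw [← emb_eta y]
  rw [fv, av, emb_smul, emb_smul, emb_add, emb_sub]
  simp only [emb_fst, emb_snd, sub_self, sub_zero, smul_zero, mul_one, add_zero, zero_add, mul_zero]

end ops

/-- The closed star subalgebra generated by `T`. -/
noncomputable def MM (T : H2 →L[ℂ] H2) : StarSubalgebra ℂ (H2 →L[ℂ] H2) :=
  (StarAlgebra.adjoin ℂ {T}).topologicalClosure

section mem

variable {U : l2Z →L[ℂ] l2Z} (hU : ∀ n : ℤ, U (ee n) = ee (n + 1))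
  {T : H2 →L[ℂ] H2} (hT : ∀ (x : l2Z) (c : ℂ), T (emb x c) = emb (U x + c • ee 0) 0)

lemma T_mem : T ∈ MM T :=
  StarSubalgebra.le_topologicalClosure _ (StarAlgebra.self_mem_adjoin_singleton ℂ T)

include hU hT

lemma R_eq : T * star T - 1 = rk (fv 0) (fv 0) - rk av av := by
  rw [ContinuousLinearMap.star_eq_adjoint, ContinuousLinearMap.mul_def, TTadj hU hT]
  abel

omit hU hT in
lemma haa : rk (fv 0) (fv 0) * rk (fv 0) (fv 0) = rk (fv 0) (fv 0) := by
  rw [ContinuousLinearMap.mul_def, rk_comp_rk, inner_fv_fv, if_pos rfl]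
  module

omit hU hT in
lemma hbb2 : rk av av * rk av av = rk av av := by
  rw [ContinuousLinearMap.mul_def, rk_comp_rk, inner_av_av]
  module

omit hU hT in
lemma hab : rk (fv 0) (fv 0) * rk av av = 0 := by
  rw [ContinuousLinearMap.mul_def, rk_comp_rk, inner_fv_av]
  module

omit hU hT in
lemma hba : rk av av * rk (fv 0) (fv 0) = 0 := by
  rw [ContinuousLinearMap.mul_def, rk_comp_rk, inner_av_fv]
  module

lemma R_mem : rk (fv 0) (fv 0) - rk av av ∈ MM T := by
  rw [← R_eq hU hT]
  exact sub_mem (mul_mem (T_mem) (star_mem (T_mem))) (one_mem _)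

omit hU hT in
lemma RR_eq : (rk (fv 0) (fv 0) - rk av av) * (rk (fv 0) (fv 0) - rk av av)
    = rk (fv 0) (fv 0) + rk av av := by
  have h : ∀ a b : H2 →L[ℂ] H2, (a - b) * (a - b) = a * a - a * b - b * a + b * b := by
    intro a b; rw [sub_mul, mul_sub, mul_sub]; abel
  rw [h, haa, hbb2, hab, hba]
  abel

lemma P_mem : rk (fv 0) (fv 0) ∈ MM T := by
  have h : rk (fv 0) (fv 0) = (2⁻¹ : ℂ) •
      ((rk (fv 0) (fv 0) - rk av av) * (rk (fv 0) (fv 0) - rk av av)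
        + (rk (fv 0) (fv 0) - rk av av)) := by
    rw [RR_eq]
    module
  rw [h]
  exact SMulMemClass.smul_mem _ (add_mem (mul_mem (R_mem hU hT) (R_mem hU hT)) (R_mem hU hT))

lemma Q_mem : rk av av ∈ MM T := by
  have h : rk av av = (2⁻¹ : ℂ) •
      ((rk (fv 0) (fv 0) - rk av av) * (rk (fv 0) (fv 0) - rk av av)
        - (rk (fv 0) (fv 0) - rk av av)) := by
    rw [RR_eq]
    module
  rw [h]
  exact SMulMemClass.smul_mem _ (sub_mem (mul_mem (R_mem hU hT) (R_mem hU hT)) (R_mem hU hT))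

lemma D_fv (n : ℤ) : ((1 - rk av av) * star T) (fv n) = fv (n - 1) := by
  rw [ContinuousLinearMap.mul_apply, ContinuousLinearMap.star_eq_adjoint, Tadj_fv hU hT]
  simp only [ContinuousLinearMap.sub_apply, ContinuousLinearMap.one_apply, rk_apply,
    inner_add_right, inner_smul_right, inner_av_fv, inner_av_av, mul_one, zero_add]
  module

lemma D_mem : (1 - rk av av) * star T ∈ MM T :=
  mul_mem (sub_mem (one_mem _) (Q_mem hU hT)) (star_mem T_mem)

lemma E_mem : ∀ n : ℤ, rk (fv n) (fv 0) ∈ MM T := by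
  intro n
  induction n using Int.induction_on with
  | zero => exact P_mem hU hT
  | succ k ih =>
      have h : rk (fv (k + 1)) (fv 0) = T * rk (fv k) (fv 0) := by
        rw [ContinuousLinearMap.mul_def, comp_rk, T_fv hU hT]
      rw [h]; exact mul_mem T_mem ih
  | pred k ih =>
      have h : rk (fv (-(k : ℤ) - 1)) (fv 0) = ((1 - rk av av) * star T) * rk (fv (-k)) (fv 0) := by
        rw [ContinuousLinearMap.mul_def ((1 - rk av av) * star T), comp_rk, D_fv hU hT]
      rw [h]; exact mul_mem (D_mem hU hT) ih

lemma rk_fv_av_mem (n : ℤ) : rk (fv n) av ∈ MM T := by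
  have h0 : rk (fv 0) av = T * rk av av := by
    rw [ContinuousLinearMap.mul_def, comp_rk, T_av hT]
  have h0m : rk (fv 0) av ∈ MM T := by rw [h0]; exact mul_mem T_mem (Q_mem hU hT)
  have h : rk (fv n) av = rk (fv n) (fv 0) * rk (fv 0) av := by
    rw [ContinuousLinearMap.mul_def, rk_comp_rk, inner_fv_fv, if_pos rfl]
    module
  rw [h]
  exact mul_mem (E_mem hU hT n) h0m

lemma rk_bb_mem (i j : Option ℤ) : rk (bb i) (bb j) ∈ MM T := by
  have hfvfv : ∀ m n : ℤ, rk (fv m) (fv n) ∈ MM T := by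
    intro m n
    have h : rk (fv m) (fv n) = rk (fv m) (fv 0) * star (rk (fv n) (fv 0)) := by
      rw [star_rk, ContinuousLinearMap.mul_def, rk_comp_rk, inner_fv_fv, if_pos rfl]
      module
    rw [h]
    exact mul_mem (E_mem hU hT m) (star_mem (E_mem hU hT n))
  match i, j with
  | none, none => exact Q_mem hU hT
  | none, some n => exact star_rk (fv n) av ▸ star_mem (rk_fv_av_mem hU hT n)
  | some m, none => exact rk_fv_av_mem hU hT m
  | some m, some n => exact hfvfv m n

lemma rk_bb_right_mem (i : Option ℤ) (w : H2) : rk (bb i) w ∈ MM T := by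
  let W : Submodule ℂ H2 :=
    { carrier := {w | rk (bb i) w ∈ MM T}
      add_mem' := fun {a b} ha hb => by
        simp only [Set.mem_setOf_eq, rk_add_right] at *
        exact add_mem ha hb
      zero_mem' := by
        simp only [Set.mem_setOf_eq, rk_zero_right]
        exact zero_mem _
      smul_mem' := fun c x hx => by
        simp only [Set.mem_setOf_eq, rk_smul_right] at *
        exact SMulMemClass.smul_mem _ hx }
  have hWclosed : IsClosed (W : Set H2) := by
    have heq : (W : Set H2) = (fun w => rk (bb i) w) ⁻¹' ((MM T : Set (H2 →L[ℂ] H2))) := rfl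
    rw [heq]
    exact (StarSubalgebra.isClosed_topologicalClosure _).preimage (continuous_rk_right _)
  have htop := eq_top_of_bb_mem W hWclosed (fun j => rk_bb_mem hU hT i j)
  have : w ∈ W := htop ▸ Submodule.mem_top
  exact this

lemma rk_all_mem (u w : H2) : rk u w ∈ MM T := by
  let W : Submodule ℂ H2 :=
    { carrier := {u | rk u w ∈ MM T}
      add_mem' := fun {a b} ha hb => by
        simp only [Set.mem_setOf_eq] at *
        rw [show rk (a + b) w = rk a w + rk b w by ext x; simp [rk_apply, add_smul]]
        exact add_mem ha hb
      zero_mem' := by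
        simp only [Set.mem_setOf_eq]
        rw [show rk 0 w = 0 by ext x; simp [rk_apply]]
        exact zero_mem _
      smul_mem' := fun c x hx => by
        simp only [Set.mem_setOf_eq] at *
        rw [show rk (c • x) w = c • rk x w by ext z; simp [rk_apply, smul_smul, mul_comm]]
        exact SMulMemClass.smul_mem _ hx }
  have hWclosed : IsClosed (W : Set H2) := by
    have heq : (W : Set H2) = (fun u => rk u w) ⁻¹' ((MM T : Set (H2 →L[ℂ] H2))) := rfl
    rw [heq]
    exact (StarSubalgebra.isClosed_topologicalClosure _).preimage (continuous_rk_left _)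
  have htop := eq_top_of_bb_mem W hWclosed (fun j => rk_bb_right_mem hU hT j w)
  have : u ∈ W := htop ▸ Submodule.mem_top
  exact this

end mem

end Stmt10

/-- the C*-algebra `B = C*(T)` contains all compact operators on
`H`; in particular, the identity representation of `B` is irreducible (the only
closed `B`-invariant subspaces are `{0}` and `H`). -/
theorem stmt_10 (U : l2Z →L[ℂ] l2Z) (hU : ∀ n : ℤ, U (ee n) = ee (n + 1))
    (T : H2 →L[ℂ] H2)
    (hT : ∀ (x : l2Z) (c : ℂ), T (emb x c) = emb (U x + c • ee 0) 0) :
    (∀ S : H2 →L[ℂ] H2, IsCompactOperator S →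
        S ∈ (StarAlgebra.adjoin ℂ {T}).topologicalClosure) ∧
    (∀ V : Submodule ℂ H2, IsClosed (V : Set H2) →
        (∀ S ∈ (StarAlgebra.adjoin ℂ {T}).topologicalClosure, ∀ v ∈ V, S v ∈ V) →
        V = ⊥ ∨ V = ⊤) := by
  constructor
  · intro S hS
    show S ∈ Stmt10.MM T
    have hMclosed : IsClosed ((Stmt10.MM T : Set (H2 →L[ℂ] H2))) :=
      StarSubalgebra.isClosed_topologicalClosure _
    have key : ∀ ε : ℝ, 0 < ε → ∃ F, F ∈ Stmt10.MM T ∧ ‖S - F‖ < ε := by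
      intro ε hε
      set δ : ℝ := ε / 4 with hδdef
      have hδ : 0 < δ := by positivity
      obtain ⟨K, hK, hKsub⟩ := hS.image_closedBall_subset_compact 1
      obtain ⟨t, htfin, htsub⟩ := Metric.totallyBounded_iff.1 hK.totallyBounded δ hδ
      have hconv : ∀ y : H2, ∃ s₀ : Finset (Option ℤ), ∀ s : Finset (Option ℤ), s₀ ⊆ s →
          ‖y - Stmt10.Pfin s y‖ < δ := by
        intro y
        have h : Tendsto (fun s : Finset (Option ℤ) =>
            ∑ i ∈ s, (inner ℂ (Stmt10.bb i) y : ℂ) • Stmt10.bb i) atTop (nhds y) :=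
          Stmt10.bb_hasSum y
        have h2 := Metric.tendsto_nhds.1 h δ hδ
        rw [Filter.eventually_atTop] at h2
        obtain ⟨s₀, hs₀⟩ := h2
        refine ⟨s₀, fun s hs => ?_⟩
        have h3 := hs₀ s hs
        rw [dist_eq_norm] at h3
        rw [Stmt10.Pfin_apply, norm_sub_rev]
        exact h3
      choose g hg using hconv
      set s : Finset (Option ℤ) := htfin.toFinset.sup g with hsdef
      have hb : ∀ x : H2, ‖x‖ ≤ 1 → ‖S x - Stmt10.Pfin s (S x)‖ < 3 * δ := by
        intro x hx
        have hSx : S x ∈ K := hKsub ⟨x, by simpa [Metric.mem_closedBall] using hx, rfl⟩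
        have h4 := htsub hSx
        rw [Set.mem_iUnion₂] at h4
        obtain ⟨y, hyt, hy⟩ := h4
        rw [Metric.mem_ball, dist_eq_norm] at hy
        have h1 : ‖y - Stmt10.Pfin s y‖ < δ :=
          hg y s (Finset.le_sup (htfin.mem_toFinset.2 hyt))
        have h2 : ‖Stmt10.Pfin s (y - S x)‖ ≤ ‖y - S x‖ := Stmt10.Pfin_norm_le s _
        have hdecomp : S x - Stmt10.Pfin s (S x)
            = ((S x - y) + (y - Stmt10.Pfin s y)) + Stmt10.Pfin s (y - S x) := by
          rw [map_sub]; abel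
        rw [hdecomp]
        calc ‖((S x - y) + (y - Stmt10.Pfin s y)) + Stmt10.Pfin s (y - S x)‖
            ≤ ‖(S x - y) + (y - Stmt10.Pfin s y)‖ + ‖Stmt10.Pfin s (y - S x)‖ :=
              norm_add_le _ _
          _ ≤ (‖S x - y‖ + ‖y - Stmt10.Pfin s y‖) + ‖y - S x‖ :=
              add_le_add (norm_add_le _ _) h2
          _ < 3 * δ := by rw [norm_sub_rev y (S x)]; linarith [hy, h1]
      refine ⟨(Stmt10.Pfin s).comp S, ?_, ?_⟩
      · have hcomp : (Stmt10.Pfin s).comp S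
            = ∑ i ∈ s, Stmt10.rk (Stmt10.bb i) (ContinuousLinearMap.adjoint S (Stmt10.bb i)) := by
          rw [Stmt10.Pfin, ContinuousLinearMap.finset_sum_comp]
          exact Finset.sum_congr rfl fun i _ => Stmt10.rk_comp _ _ _
        rw [hcomp]
        exact sum_mem fun i _ => Stmt10.rk_all_mem hU hT _ _
      · have hop : ‖S - (Stmt10.Pfin s).comp S‖ ≤ 3 * δ := by
          refine ContinuousLinearMap.opNorm_le_bound _ (by positivity) fun x => ?_
          rcases eq_or_ne x 0 with rfl | hx
          · simp
          · have hxn : ‖x‖ ≠ 0 := norm_ne_zero_iff.2 hx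
            have hu : ‖(‖x‖⁻¹ • x)‖ ≤ 1 := by
              rw [norm_smul, norm_inv, norm_norm, inv_mul_cancel₀ hxn]
            have hb2 := le_of_lt (hb _ hu)
            have h5 : ‖(S - (Stmt10.Pfin s).comp S) (‖x‖⁻¹ • x)‖ ≤ 3 * δ := by
              simpa only [ContinuousLinearMap.sub_apply, ContinuousLinearMap.comp_apply]
                using hb2
            rw [ContinuousLinearMap.map_smul_of_tower, norm_smul, norm_inv, norm_norm] at h5
            calc ‖(S - (Stmt10.Pfin s).comp S) x‖
                = ‖x‖ * (‖x‖⁻¹ * ‖(S - (Stmt10.Pfin s).comp S) x‖) := by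
                  field_simp
              _ ≤ ‖x‖ * (3 * δ) := mul_le_mul_of_nonneg_left h5 (norm_nonneg x)
              _ = 3 * δ * ‖x‖ := mul_comm _ _
        calc ‖S - (Stmt10.Pfin s).comp S‖ ≤ 3 * δ := hop
          _ < ε := by rw [hδdef]; linarith
    have hcl : S ∈ closure ((Stmt10.MM T : Set (H2 →L[ℂ] H2))) := by
      rw [Metric.mem_closure_iff]
      intro ε hε
      obtain ⟨F, hF, hFe⟩ := key ε hε
      exact ⟨F, hF, by rwa [dist_eq_norm]⟩
    rwa [hMclosed.closure_eq] at hcl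
  · intro V hVclosed hVinv
    by_cases hbot : V = ⊥
    · exact Or.inl hbot
    · refine Or.inr ?_
      obtain ⟨v, hvV, hv0⟩ := (Submodule.ne_bot_iff V).1 hbot
      rw [Submodule.eq_top_iff']
      intro u
      have h1 := hVinv _ (Stmt10.rk_all_mem hU hT ((inner ℂ v v : ℂ)⁻¹ • u) v) v hvV
      rw [Stmt10.rk_apply] at h1
      have hvv : (inner ℂ v v : ℂ) ≠ 0 := inner_self_ne_zero.2 hv0
      rwa [smul_smul, mul_inv_cancel₀ hvv, one_smul] at h1
end
end

section
/- With T as above, the quotient norm of T modulo the compact operators is 1: ‖T + K(H)‖ = 1 in the Calkin algebra, while ‖T‖ = √2. In particular, the quotient map B → B/K(H) is not isometric on the operator algebra generated by T. -/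
open scoped ENNReal
open Filter ContinuousLinearMap

set_option synthInstance.maxHeartbeats 1000000
set_option maxHeartbeats 1000000

noncomputable section

namespace S16

noncomputable def P : H2 ≃L[ℂ] (l2Z × ℂ) := WithLp.prodContinuousLinearEquiv 2 ℂ l2Z ℂ

noncomputable def Vop (A : l2Z →L[ℂ] l2Z) : H2 →L[ℂ] H2 :=
  ((P.symm : (l2Z × ℂ) →L[ℂ] H2).comp (A.prodMap (ContinuousLinearMap.id ℂ ℂ))).comp
    (P : H2 →L[ℂ] (l2Z × ℂ))

lemma Vop_apply (A : l2Z →L[ℂ] l2Z) (v : H2) : Vop A v = emb (A v.fst) v.snd := rfl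
lemma emb_eta (v : H2) : emb v.fst v.snd = v := rfl
lemma emb_add (x y c d) : emb x c + emb y d = emb (x + y) (c + d) := rfl
lemma emb_sub (x y c d) : emb x c - emb y d = emb (x - y) (c - d) := rfl
lemma emb_smul (a : ℂ) (x c) : a • emb x c = emb (a • x) (a * c) := rfl

lemma norm_ee (n : ℤ) : ‖ee n‖ = 1 := by
  simpa [ee] using lp.norm_single (E := fun _ : ℤ => ℂ) (p := 2) (by norm_num) n (1 : ℂ)

lemma norm_emb (x c) : ‖emb x c‖ = Real.sqrt (‖x‖ ^ 2 + ‖c‖ ^ 2) :=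
  WithLp.prod_norm_eq_of_L2 _

lemma Vop_mul (A B : l2Z →L[ℂ] l2Z) : Vop A * Vop B = Vop (A * B) := by
  ext v : 1
  rw [ContinuousLinearMap.mul_apply, Vop_apply, Vop_apply, Vop_apply]
  rfl

lemma Vop_one : Vop 1 = 1 := by
  ext v : 1
  rw [Vop_apply, ContinuousLinearMap.one_apply]
  exact emb_eta v

lemma norm_Vop_apply (A : l2Z →L[ℂ] l2Z) (hA : ∀ x, ‖A x‖ = ‖x‖) (v : H2) :
    ‖Vop A v‖ = ‖v‖ := by
  rw [Vop_apply, norm_emb, hA, ← WithLp.prod_norm_eq_of_L2]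

lemma isCompact_smulRight (w : H2) :
    IsCompactOperator ((ContinuousLinearMap.id ℂ ℂ).smulRight w) := by
  refine ⟨((ContinuousLinearMap.id ℂ ℂ).smulRight w) '' Metric.closedBall 0 1,
    (isCompact_closedBall 0 1).image (ContinuousLinearMap.continuous _), ?_⟩
  exact Filter.mem_of_superset (Metric.closedBall_mem_nhds 0 one_pos)
    (Set.subset_preimage_image _ _)

lemma not_finiteDimensional_H2 : ¬ FiniteDimensional ℂ H2 := by
  intro hfd
  have horth : Orthonormal ℂ (fun n : ℤ => emb (ee n) 0) := by
    rw [orthonormal_iff_ite]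
    intro i j
    have : (inner ℂ (emb (ee i) 0) (emb (ee j) 0) : ℂ)
        = inner ℂ (ee i) (ee j) + inner ℂ (0 : ℂ) (0 : ℂ) :=
      WithLp.prod_inner_apply _ _
    rw [this]
    simp only [inner_zero_right, add_zero]
    unfold ee
    rw [lp.inner_single_left]
    by_cases h : i = j
    · subst h; simp [lp.single_apply]
    · simp [lp.single_apply, h, Ne.symm h]
  exact Module.Finite.not_linearIndependent_of_infinite (R := ℂ)
    (fun n : ℤ => emb (ee n) 0) horth.linearIndependent

end S16

/-- the distance of `T` to the compact operators (the norm of its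
image in the Calkin algebra) is 1 while `‖T‖ = √2`; in particular the quotient
map modulo the compacts is not isometric on the unital operator algebra
generated by `T`. -/
theorem stmt_16 (U : l2Z →L[ℂ] l2Z) (hU : ∀ n : ℤ, U (ee n) = ee (n + 1))
    (hUunitary : U ∈ unitary (l2Z →L[ℂ] l2Z))
    (T : H2 →L[ℂ] H2)
    (hT : ∀ (x : l2Z) (c : ℂ), T (emb x c) = emb (U x + c • ee 0) 0) :
    sInf {r : ℝ | ∃ C : H2 →L[ℂ] H2, IsCompactOperator C ∧ r = ‖T + C‖} = 1 ∧
    ‖T‖ = Real.sqrt 2 ∧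
    ∃ A ∈ (Algebra.adjoin ℂ {T}).topologicalClosure,
      sInf {r : ℝ | ∃ C : H2 →L[ℂ] H2, IsCompactOperator C ∧ r = ‖A + C‖} ≠ ‖A‖ := by
  obtain ⟨hsUU, hUsU⟩ := Unitary.mem_iff.mp hUunitary
  have hUiso : ∀ x, ‖U x‖ = ‖x‖ :=
    ContinuousLinearMap.norm_map_of_mem_unitary hUunitary
  have hsUiso : ∀ x, ‖(star U) x‖ = ‖x‖ :=
    ContinuousLinearMap.norm_map_of_mem_unitary (Unitary.star_mem hUunitary)
  set Vc := S16.Vop U with hVcdef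
  set W := S16.Vop (star U) with hWdef
  have hWV : W * Vc = 1 := by rw [hWdef, hVcdef, S16.Vop_mul, hsUU, S16.Vop_one]
  have hVW : Vc * W = 1 := by rw [hWdef, hVcdef, S16.Vop_mul, hUsU, S16.Vop_one]
  have hVciso : ∀ v, ‖Vc v‖ = ‖v‖ := S16.norm_Vop_apply U hUiso
  have hWiso : ∀ v, ‖W v‖ = ‖v‖ := S16.norm_Vop_apply (star U) hsUiso
  have hW_norm_le : ‖W‖ ≤ 1 :=
    ContinuousLinearMap.opNorm_le_bound _ zero_le_one (fun v => by rw [hWiso, one_mul])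
  have hVc_norm : ‖Vc‖ = 1 := by
    refine le_antisymm
      (ContinuousLinearMap.opNorm_le_bound _ zero_le_one (fun v => by rw [hVciso, one_mul])) ?_
    have h1 : ‖emb (ee 0) 0‖ = 1 := by
      rw [S16.norm_emb, S16.norm_ee]; simp
    have := Vc.le_opNorm (emb (ee 0) 0)
    rw [hVciso, h1, mul_one] at this
    exact this
  have hTv : ∀ v : H2, T v = emb (U v.fst + v.snd • ee 0) 0 := fun v => hT v.fst v.snd
  -- T - Vc is a compact (rank-one) operator
  have hRv : ∀ v : H2, (T - Vc) v = v.snd • emb (ee 0) (-1) := by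
    intro v
    rw [ContinuousLinearMap.sub_apply, hTv, hVcdef, S16.Vop_apply, S16.emb_sub, S16.emb_smul]
    congr 1
    · abel
    · ring
  have hRcomp : IsCompactOperator (⇑(T - Vc)) := by
    have hfun : ⇑(T - Vc) = (⇑((ContinuousLinearMap.id ℂ ℂ).smulRight (emb (ee 0) (-1)))) ∘
        (⇑((ContinuousLinearMap.snd ℂ l2Z ℂ).comp (S16.P : H2 →L[ℂ] l2Z × ℂ))) := by
      funext v
      rw [hRv]
      rfl
    rw [hfun]
    exact (S16.isCompact_smulRight _).comp_clm _
  -- the lower bound: every compact perturbation of T has norm at least 1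
  have hlow : ∀ C : H2 →L[ℂ] H2, IsCompactOperator (⇑C) → 1 ≤ ‖T + C‖ := by
    intro C hC
    by_contra hlt
    push_neg at hlt
    set A := W * (T + C) with hA
    have hAnorm : ‖A‖ < 1 := by
      calc ‖A‖ ≤ ‖W‖ * ‖T + C‖ := norm_mul_le _ _
        _ ≤ 1 * ‖T + C‖ := by
            exact mul_le_mul_of_nonneg_right hW_norm_le (norm_nonneg _)
        _ = ‖T + C‖ := one_mul _
        _ < 1 := hlt
    have hunit1 : IsUnit (1 - A) := (Units.oneSub A hAnorm).isUnit
    have hWD : W * (Vc - (T + C)) = 1 - A := by rw [mul_sub, hWV, hA]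
    have hDeq : Vc - (T + C) = Vc * (1 - A) := by
      rw [← hWD, ← mul_assoc, hVW, one_mul]
    have hVcUnit : IsUnit Vc := ⟨⟨Vc, W, hVW, hWV⟩, rfl⟩
    have hDunit : IsUnit (Vc - (T + C)) := by
      rw [hDeq]; exact hVcUnit.mul hunit1
    have hDc : IsCompactOperator (⇑(Vc - (T + C))) := by
      have hfun : ⇑(Vc - (T + C)) = (-⇑(T - Vc)) + (-⇑C) := by
        funext v
        simp only [ContinuousLinearMap.sub_apply, ContinuousLinearMap.add_apply,
          Pi.add_apply, Pi.neg_apply]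
        abel
      rw [hfun]
      exact hRcomp.neg.add hC.neg
    obtain ⟨d, hd⟩ := hDunit
    have hid : IsCompactOperator (⇑(1 : H2 →L[ℂ] H2)) := by
      have h2 : (1 : H2 →L[ℂ] H2) = (↑d⁻¹ : H2 →L[ℂ] H2) * (Vc - (T + C)) := by
        rw [← hd, Units.inv_mul]
      have h3 : ⇑(1 : H2 →L[ℂ] H2)
          = (⇑(↑d⁻¹ : H2 →L[ℂ] H2)) ∘ (⇑(Vc - (T + C))) := by
        rw [h2]; rfl
      rw [h3]
      exact hDc.clm_comp _
    obtain ⟨K, hKc, hKmem⟩ := hid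
    have hK0 : K ∈ nhds (0 : H2) := by simpa using hKmem
    obtain ⟨ε, hε, hball⟩ := Metric.mem_nhds_iff.mp hK0
    have hsub : Metric.closedBall (0 : H2) (ε / 2) ⊆ K :=
      fun x hx => hball (lt_of_le_of_lt (Metric.mem_closedBall.mp hx) (by linarith))
    have hcb : IsCompact (Metric.closedBall (0 : H2) (ε / 2)) :=
      hKc.of_isClosed_subset Metric.isClosed_closedBall hsub
    exact S16.not_finiteDimensional_H2
      (FiniteDimensional.of_isCompact_closedBall₀ ℂ (by linarith) hcb)
  -- 1 is attained: C = Vc - T is compact and T + (Vc - T) = Vc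
  have hVcTcomp : IsCompactOperator (⇑(Vc - T)) := by
    have hfun : ⇑(Vc - T) = -⇑(T - Vc) := by
      funext v
      simp only [ContinuousLinearMap.sub_apply, Pi.neg_apply]
      abel
    rw [hfun]
    exact hRcomp.neg
  have hmem1 : (1 : ℝ) ∈ {r : ℝ | ∃ C : H2 →L[ℂ] H2, IsCompactOperator C ∧ r = ‖T + C‖} := by
    refine ⟨Vc - T, hVcTcomp, ?_⟩
    rw [add_sub_cancel, hVc_norm]
  have hlb : ∀ r ∈ {r : ℝ | ∃ C : H2 →L[ℂ] H2, IsCompactOperator C ∧ r = ‖T + C‖}, 1 ≤ r := by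
    rintro r ⟨C, hC, rfl⟩
    exact hlow C hC
  have hInf : sInf {r : ℝ | ∃ C : H2 →L[ℂ] H2, IsCompactOperator C ∧ r = ‖T + C‖} = 1 :=
    le_antisymm (csInf_le ⟨1, hlb⟩ hmem1) (le_csInf ⟨1, hmem1⟩ hlb)
  -- the norm of T
  have hTnorm : ‖T‖ = Real.sqrt 2 := by
    have hub : ‖T‖ ≤ Real.sqrt 2 := by
      refine ContinuousLinearMap.opNorm_le_bound _ (Real.sqrt_nonneg 2) (fun v => ?_)
      have h1 : ‖T v‖ = ‖U v.fst + v.snd • ee 0‖ := by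
        rw [hTv, S16.norm_emb]
        simp [Real.sqrt_sq (norm_nonneg _)]
      have h2 : ‖U v.fst + v.snd • ee 0‖ ≤ ‖v.fst‖ + ‖v.snd‖ := by
        calc ‖U v.fst + v.snd • ee 0‖ ≤ ‖U v.fst‖ + ‖v.snd • ee 0‖ := norm_add_le _ _
          _ = ‖v.fst‖ + ‖v.snd‖ := by rw [hUiso, norm_smul, S16.norm_ee, mul_one]
      have h3 : ‖v.fst‖ + ‖v.snd‖ ≤ Real.sqrt 2 * ‖v‖ := by
        rw [WithLp.prod_norm_eq_of_L2, ← Real.sqrt_mul (by norm_num)]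
        have h4 : ‖v.fst‖ + ‖v.snd‖ = Real.sqrt ((‖v.fst‖ + ‖v.snd‖) ^ 2) :=
          (Real.sqrt_sq (by positivity)).symm
        rw [h4]
        exact Real.sqrt_le_sqrt (by nlinarith [sq_nonneg (‖v.fst‖ - ‖v.snd‖)])
      rw [h1]
      exact le_trans h2 h3
    have hlb2 : Real.sqrt 2 ≤ ‖T‖ := by
      set w : H2 := emb (ee (-1)) 1 with hw
      have hww : ‖w‖ = Real.sqrt 2 := by
        rw [hw, S16.norm_emb, S16.norm_ee]
        norm_num
      have hTw : ‖T w‖ = 2 := by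
        rw [hw, hT]
        have hU0 : U (ee (-1)) = ee 0 := by
          have := hU (-1)
          norm_num at this
          exact this
        rw [hU0, one_smul]
        have : ee 0 + ee 0 = (2 : ℂ) • ee 0 := by
          rw [two_smul]
        rw [this, S16.norm_emb, norm_smul, S16.norm_ee]
        have h2c : ‖(2:ℂ)‖ = 2 := by norm_num
        rw [h2c]
        rw [show ((2:ℝ) * 1) ^ 2 + ‖(0:ℂ)‖ ^ 2 = 2 ^ 2 by norm_num]
        exact Real.sqrt_sq (by norm_num)
      have hle := T.le_opNorm w
      rw [hTw, hww] at hle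
      nlinarith [Real.sq_sqrt (by norm_num : (2:ℝ) ≥ 0), Real.sqrt_nonneg 2,
        ContinuousLinearMap.opNorm_nonneg T]
    exact le_antisymm hub hlb2
  refine ⟨hInf, hTnorm, T, ?_, ?_⟩
  · exact (Algebra.adjoin ℂ {T}).le_topologicalClosure (Algebra.subset_adjoin rfl)
  · rw [hInf, hTnorm]
    intro h
    have h2 := Real.sq_sqrt (by norm_num : (0:ℝ) ≤ 2)
    rw [← h] at h2
    norm_num at h2
end
end
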